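/- arXiv:1811.10854 — 4 statements merged into one kernel-verified Lean document; each statement's English description precedes it below -/
import Mathlib

section
/- In a sharply 2-transitive permutation group, all involutions are conjugate. -/
/-! Conjugation by `g` turns an involution swapping `x` and `i • x` into one swapping `g • x` and
`g • i • x`. By 2-transitivity `g` can be chosen so that this pair is any pair `(y, j • y)` moved by
another involution `j`, and by sharpness an element is determined by the images of two points, so
the conjugate equals `j`. -/

def SharplyTwoTransitive (G X : Type*) [Group G] [MulAction G X] : Prop :=
  ∀ x y x' y' : X, x ≠ y → x' ≠ y' → ∃! g : G, g • x = x' ∧ g • y = y'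

namespace SharplyTwoTransitive

variable {G X : Type*} [Group G] [MulAction G X]

theorem eq_of_smul_eq_of_smul_eq (h : SharplyTwoTransitive G X) {x y : X} (hxy : x ≠ y)
    {g k : G} (hx : g • x = k • x) (hy : g • y = k • y) : g = k :=
  (h x y (k • x) (k • y) hxy ((MulAction.injective k).ne hxy)).unique ⟨hx, hy⟩ ⟨rfl, rfl⟩

theorem exists_smul_ne (h : SharplyTwoTransitive G X) (hX : ∃ x y : X, x ≠ y) {g : G}
    (hg : g ≠ 1) : ∃ x : X, g • x ≠ x := by
  by_contra! hfix
  obtain ⟨x, y, hxy⟩ := hX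
  exact hg (h.eq_of_smul_eq_of_smul_eq hxy (by rw [hfix, one_smul]) (by rw [hfix, one_smul]))

theorem eq_of_sq_eq_one_of_smul_eq (h : SharplyTwoTransitive G X) {i j : G} (hi : i ^ 2 = 1)
    (hj : j ^ 2 = 1) {x : X} (hx : i • x ≠ x) (hij : i • x = j • x) : i = j := by
  have swap {k : G} (hk : k ^ 2 = 1) : k • k • x = x := by rw [smul_smul, ← sq, hk, one_smul]
  refine h.eq_of_smul_eq_of_smul_eq hx.symm hij ?_
  rw [swap hi, hij, swap hj]

end SharplyTwoTransitive

/-- In a sharply 2-transitive permutation group, all involutions are conjugate. -/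
theorem stmt_1 {G X : Type*} [Group G] [MulAction G X]
    (hX : ∃ x y : X, x ≠ y) (h2 : SharplyTwoTransitive G X) :
    ∀ i j : G, orderOf i = 2 → orderOf j = 2 → IsConj i j := by
  intro i j hi hj
  have hi_sq : i ^ 2 = 1 := hi ▸ pow_orderOf_eq_one i
  have hj_sq : j ^ 2 = 1 := hj ▸ pow_orderOf_eq_one j
  obtain ⟨x, hx⟩ := h2.exists_smul_ne hX (g := i) (by rintro rfl; simp at hi)
  obtain ⟨y, hy⟩ := h2.exists_smul_ne hX (g := j) (by rintro rfl; simp at hj)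
  obtain ⟨g, ⟨hgx, hgix⟩, -⟩ := h2 x (i • x) y (j • y) hx.symm hy.symm
  have hconj_sq : (g * i * g⁻¹) ^ 2 = 1 := by rw [conj_pow, hi_sq, mul_one, mul_inv_cancel]
  have hconj_y : (g * i * g⁻¹) • y = j • y := by
    subst hgx
    rw [mul_smul, mul_smul, inv_smul_smul, hgix]
  refine isConj_iff.mpr ⟨g, h2.eq_of_sq_eq_one_of_smul_eq hconj_sq hj_sq ?_ hconj_y⟩
  rwa [hconj_y]
end

section
/- In a near-field of characteristic 0, every element of the prime field (the image of the rationals) lies in the kernel, i.e., is left-distributive: for n a natural-number multiple of 1 and m a nonzero such multiple, the element m⁻¹·n satisfies (y+z)·(m⁻¹n) = y·(m⁻¹n) + z·(m⁻¹n) for all y, z. -/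
/-!
The kernel contains every `k • 1`, since left multiplication distributes, and it is closed under
products and under inverses of nonzero elements; characteristic 0 makes `m • 1` invertible.
-/

/-- A near-field: a skew field except that the distributive law
\`(y+z)*x = y*x + z*x\` need not hold (it holds only for \`x\` in the kernel). -/
class NearField (K : Type*) extends AddCommGroup K, One K, Mul K, Inv K where
  mul_assoc : ∀ a b c : K, a * b * c = a * (b * c)
  one_mul : ∀ a : K, 1 * a = a
  mul_one : ∀ a : K, a * 1 = a
  zero_mul : ∀ a : K, (0 : K) * a = 0
  mul_zero : ∀ a : K, a * 0 = 0
  mul_inv_cancel : ∀ a : K, a ≠ 0 → a * a⁻¹ = 1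
  inv_mul_cancel : ∀ a : K, a ≠ 0 → a⁻¹ * a = 1
  distrib : ∀ a b c : K, a * (b + c) = a * b + a * c
  one_ne_zero : (1 : K) ≠ 0

/-- The kernel of a near-field: the elements with respect to which
multiplication is left distributive. -/
def NearField.ker (K : Type*) [NearField K] : Set K :=
  {x : K | ∀ y z : K, (y + z) * x = y * x + z * x}

namespace NearField

variable {K : Type*} [NearField K]

theorem mul_nsmul_one (a : K) (k : ℕ) : a * (k • (1 : K)) = k • a := by
  induction k with
  | zero => simpa only [zero_smul] using NearField.mul_zero a
  | succ k ih => rw [succ_nsmul, succ_nsmul, NearField.distrib, ih, NearField.mul_one]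

theorem nsmul_one_mem_ker (k : ℕ) : k • (1 : K) ∈ ker K := fun y z => by
  rw [mul_nsmul_one, mul_nsmul_one, mul_nsmul_one, smul_add]

theorem mul_mem_ker {x x' : K} (hx : x ∈ ker K) (hx' : x' ∈ ker K) : x * x' ∈ ker K :=
  fun y z => by
    rw [← NearField.mul_assoc, hx, hx', NearField.mul_assoc, NearField.mul_assoc]

-- `y ↦ y * x⁻¹` inverts the additive map `y ↦ y * x`, so it is additive as well.
theorem inv_mem_ker {x : K} (hx0 : x ≠ 0) (hx : x ∈ ker K) : x⁻¹ ∈ ker K := fun y z => by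
  have mul_inv_mul (w : K) : w * x⁻¹ * x = w := by
    rw [NearField.mul_assoc, NearField.inv_mul_cancel x hx0, NearField.mul_one]
  have mul_mul_inv (w : K) : w * x * x⁻¹ = w := by
    rw [NearField.mul_assoc, NearField.mul_inv_cancel x hx0, NearField.mul_one]
  calc (y + z) * x⁻¹ = (y * x⁻¹ * x + z * x⁻¹ * x) * x⁻¹ := by
        rw [mul_inv_mul, mul_inv_mul]
    _ = y * x⁻¹ + z * x⁻¹ := by rw [← hx, mul_mul_inv]

end NearField

/-- In a near-field of characteristic 0, every element m⁻¹·n of the prime field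
lies in the kernel. -/
theorem stmt_6 {K : Type*} [NearField K]
    (hchar : ∀ k : ℕ, k ≠ 0 → (k • (1 : K)) ≠ 0) :
    ∀ (n m : ℕ), m ≠ 0 →
      ∀ y z : K, (y + z) * ((m • (1 : K))⁻¹ * (n • (1 : K))) =
        y * ((m • (1 : K))⁻¹ * (n • (1 : K))) + z * ((m • (1 : K))⁻¹ * (n • (1 : K))) :=
  fun n m hm =>
    NearField.mul_mem_ker (NearField.inv_mem_ker (hchar m hm) (NearField.nsmul_one_mem_ker m))
      (NearField.nsmul_one_mem_ker n)
end

section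
/- If G acts sharply 2-transitively on X and N is a normal subgroup of G intersecting the point stabilizer B = Stab_G(x) trivially and with N ≠ {1}, then N acts regularly on X and G = N ⋊ B (i.e., G = NB and N ∩ B = {1}). -/
/-!
The point stabilizers are all conjugate and `N` is normal, so `N` meets every point stabilizer
trivially: every `n ≠ 1` in `N` is fixed-point-free. Given such an `n` and points `p ≠ q`, the
element `g` with `g • p = p` and `g • (n • p) = q` conjugates `n` to an element of `N` sending
`p` to `q`. Hence `N` is transitive, and free, so regular; and `g = n * (n⁻¹ * g)` with
`n • x = g • x` is the factorization `G = N B`.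
-/

section

open MulAction

variable {G X : Type*} [Group G] [MulAction G X]

theorem SharplyTwoTransitive.isPretransitive (h2 : SharplyTwoTransitive G X) :
    IsPretransitive G X where
  exists_smul_eq p q := by
    by_cases hpq : p = q
    · exact ⟨1, by rw [one_smul, hpq]⟩
    · obtain ⟨g, ⟨hgp, -⟩, -⟩ := h2 p q q p hpq (Ne.symm hpq)
      exact ⟨g, hgp⟩

theorem Subgroup.Normal.eq_one_of_smul_eq_self [IsPretransitive G X] {N : Subgroup G}
    (hN : N.Normal) {x : X} (hNB : N ⊓ stabilizer G x = ⊥) {n : G} (hn : n ∈ N) {p : X}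
    (hnp : n • p = p) : n = 1 := by
  obtain ⟨g, rfl⟩ := MulAction.exists_smul_eq G x p
  have hconj_mem : g⁻¹ * n * g ∈ N ⊓ stabilizer G x := by
    refine Subgroup.mem_inf.mpr ⟨by simpa using hN.conj_mem n hn g⁻¹, ?_⟩
    rw [mem_stabilizer_iff, mul_smul, mul_smul, hnp, inv_smul_smul]
  rw [hNB, Subgroup.mem_bot, mul_assoc, inv_mul_eq_one] at hconj_mem
  exact right_eq_mul.mp hconj_mem

theorem SharplyTwoTransitive.exists_mem_smul_eq_of_normal (h2 : SharplyTwoTransitive G X)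
    {N : Subgroup G} (hN : N.Normal) (hmove : ∀ p : X, ∃ n ∈ N, n • p ≠ p) (p q : X) :
    ∃ n ∈ N, n • p = q := by
  by_cases hpq : p = q
  · exact ⟨1, N.one_mem, by rw [one_smul, hpq]⟩
  obtain ⟨n, hn, hnp⟩ := hmove p
  obtain ⟨g, ⟨hgp, hgnp⟩, -⟩ := h2 p (n • p) p q (Ne.symm hnp) hpq
  refine ⟨g * n * g⁻¹, hN.conj_mem n hn g, ?_⟩
  rw [mul_smul, mul_smul, inv_smul_eq_iff.mpr hgp.symm, hgnp]

end

theorem stmt_12_general {G X : Type*} [Group G] [MulAction G X]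
    (h2 : SharplyTwoTransitive G X)
    (x : X) (N : Subgroup G) (hN : N.Normal)
    (hNB : N ⊓ MulAction.stabilizer G x = ⊥) (hNne : N ≠ ⊥) :
    (∀ p q : X, ∃! n : G, n ∈ N ∧ n • p = q) ∧
    (∀ g : G, ∃ n ∈ N, ∃ b ∈ MulAction.stabilizer G x, g = n * b) := by
  have := h2.isPretransitive
  have hfree {n : G} (hn : n ∈ N) {p : X} (hnp : n • p = p) : n = 1 :=
    hN.eq_one_of_smul_eq_self hNB hn hnp
  obtain ⟨⟨n₀, hn₀⟩, hn₀_ne⟩ := Subgroup.ne_bot_iff_exists_ne_one.mp hNne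
  have hNtrans := h2.exists_mem_smul_eq_of_normal hN fun p =>
    ⟨n₀, hn₀, fun h => hn₀_ne (Subtype.ext (hfree hn₀ h))⟩
  refine ⟨fun p q => ?_, fun g => ?_⟩
  · obtain ⟨n, hn, hnpq⟩ := hNtrans p q
    refine ⟨n, ⟨hn, hnpq⟩, fun m ⟨hm, hmpq⟩ => ?_⟩
    have hfix : (n⁻¹ * m) • p = p := by rw [mul_smul, hmpq, inv_smul_eq_iff, hnpq]
    exact (inv_mul_eq_one.mp (hfree (N.mul_mem (N.inv_mem hn) hm) hfix)).symm
  · obtain ⟨n, hn, hnx⟩ := hNtrans x (g • x)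
    refine ⟨n, hn, n⁻¹ * g, ?_, (mul_inv_cancel_left n g).symm⟩
    rw [MulAction.mem_stabilizer_iff, mul_smul, ← hnx, inv_smul_smul]

/-- If G is sharply 2-transitive on X and N is a nontrivial normal subgroup
meeting the point stabilizer B trivially, then N is regular on X and G = N ⋊ B. -/
theorem stmt_12 {G X : Type*} [Group G] [MulAction G X]
    (hX : ∃ x y : X, x ≠ y) (h2 : SharplyTwoTransitive G X)
    (x : X) (N : Subgroup G) (hN : N.Normal)
    (hNB : N ⊓ MulAction.stabilizer G x = ⊥) (hNne : N ≠ ⊥) :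
    (∀ p q : X, ∃! n : G, n ∈ N ∧ n • p = q) ∧
    (∀ g : G, ∃ n ∈ N, ∃ b ∈ MulAction.stabilizer G x, g = n * b) :=
  stmt_12_general h2 x N hN hNB hNne
end

section
/- A near-domain whose additive loop is associative (i.e., whose addition makes it a group) is a near-field. -/
/-- A near-domain: additively a loop (with the reflection property), with a
group structure on the nonzero elements, right distributivity, and the
associativity-defect elements d_{a,b}. -/
class NearDomain (K : Type*) extends Zero K, Add K, One K, Mul K, Inv K where
  add_zero : ∀ a : K, a + 0 = a
  zero_add : ∀ a : K, 0 + a = a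
  existsUnique_add_left : ∀ a b : K, ∃! x : K, a + x = b
  existsUnique_add_right : ∀ a b : K, ∃! x : K, x + a = b
  add_eq_zero_symm : ∀ a b : K, a + b = 0 → b + a = 0
  mul_assoc : ∀ a b c : K, a * b * c = a * (b * c)
  one_mul : ∀ a : K, 1 * a = a
  mul_one : ∀ a : K, a * 1 = a
  zero_mul : ∀ a : K, (0 : K) * a = 0
  mul_zero : ∀ a : K, a * 0 = 0
  mul_inv_cancel : ∀ a : K, a ≠ 0 → a * a⁻¹ = 1
  inv_mul_cancel : ∀ a : K, a ≠ 0 → a⁻¹ * a = 1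
  right_distrib : ∀ y z x : K, (y + z) * x = y * x + z * x
  one_ne_zero : (1 : K) ≠ 0
  exists_d : ∀ a b : K, ∃ d : K, d ≠ 0 ∧ ∀ x : K, a + (b + x) = (a + b) + d * x

/-!
With associative addition, `K` is a right near-ring whose nonzero elements are units, and right
distributivity gives `(-1) * x = -x`. The point is that `-1` is central: then
`-(a + b) = (a + b) * (-1) = -a + -b`, which in a group is commutativity. For `-1 ≠ 1`, the
anticommutator `θ x = (-1) * x + x * (-1)` is injective (`θ x = θ y` forces
`(y - x) * (-1) = y - x`) and takes values in the centralizer `C` of `-1`, while on `C` it is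
left multiplication by the unit `-1 + -1` of `C`. Hence `θ K ⊆ C = θ C`, and injectivity gives
`K = C`.
-/

namespace NearRing

variable {K : Type*} [AddGroup K] [Monoid K] [RightDistribClass K]

protected theorem zero_mul (x : K) : 0 * x = 0 :=
  add_left_cancel (a := 0 * x) (by rw [← add_mul, add_zero, add_zero])

protected theorem neg_mul (x y : K) : -x * y = -(x * y) :=
  (neg_eq_of_add_eq_zero_right (by rw [← add_mul, add_neg_cancel, NearRing.zero_mul])).symm

protected theorem neg_one_mul (x : K) : -1 * x = -x := by
  rw [NearRing.neg_mul, one_mul]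

protected theorem neg_one_mul_neg_one : (-1 : K) * -1 = 1 := by
  rw [NearRing.neg_one_mul, neg_neg]

def anticommNegOne (x : K) : K := -1 * x + x * -1

theorem commute_anticommNegOne (x : K) : Commute (anticommNegOne x) (-1) := by
  rw [Commute, SemiconjBy, anticommNegOne, NearRing.neg_one_mul x, NearRing.neg_one_mul, add_mul,
    NearRing.neg_mul, mul_assoc, NearRing.neg_one_mul_neg_one, mul_one, neg_add_rev, neg_neg]

theorem anticommNegOne_eq_mul {g : K} (hg : Commute g (-1)) :
    anticommNegOne g = (-1 + -1) * g := by
  rw [anticommNegOne, hg.eq, add_mul]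

theorem anticommNegOne_injective (hunit : ∀ a : K, a ≠ 0 → IsUnit a) (hm : (-1 : K) ≠ 1) :
    Function.Injective (anticommNegOne : K → K) := by
  intro x y h
  rw [anticommNegOne, anticommNegOne, NearRing.neg_one_mul, NearRing.neg_one_mul] at h
  have hfix : (y + -x) * -1 = y + -x := by
    apply add_right_cancel (b := x * -1)
    calc (y + -x) * -1 + x * -1 = y * -1 := by rw [← add_mul, neg_add_cancel_right]
      _ = y + (-y + y * -1) := by rw [add_neg_cancel_left]
      _ = y + -x + x * -1 := by rw [← h, add_assoc]
  by_contra hne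
  have hd : y + -x ≠ 0 := fun h0 => hne (add_neg_eq_zero.mp h0).symm
  exact hm ((hunit _ hd).mul_left_cancel (hfix.trans (mul_one _).symm))

theorem commute_neg_one (hunit : ∀ a : K, a ≠ 0 → IsUnit a) (x : K) : Commute x (-1) := by
  by_cases hm : (-1 : K) = 1
  · rw [hm]
    exact Commute.one_right x
  have hc0 : (-1 + -1 : K) ≠ 0 := fun h => hm (by rw [eq_neg_of_add_eq_zero_left h, neg_neg])
  have hcm : Commute (-1 + -1 : K) (-1) := by
    rw [Commute, SemiconjBy, add_mul, NearRing.neg_one_mul (-1 + -1), neg_add_rev,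
      NearRing.neg_one_mul_neg_one, neg_neg]
  obtain ⟨c, hc⟩ := hunit _ hc0
  set g := ↑c⁻¹ * anticommNegOne x
  have hg : Commute g (-1) := ((hc ▸ hcm).units_inv_left).mul_left (commute_anticommNegOne x)
  have hsame : anticommNegOne g = anticommNegOne x := by
    rw [anticommNegOne_eq_mul hg, ← hc, ← mul_assoc, Units.mul_inv, one_mul]
  exact anticommNegOne_injective hunit hm hsame ▸ hg

protected theorem mul_neg_one (hunit : ∀ a : K, a ≠ 0 → IsUnit a) (x : K) : x * -1 = -x :=
  (commute_neg_one hunit x).eq.trans (NearRing.neg_one_mul x)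

protected theorem neg_add (hunit : ∀ a : K, a ≠ 0 → IsUnit a) (x y : K) :
    -(x + y) = -x + -y := by
  rw [← NearRing.mul_neg_one hunit, add_mul, NearRing.mul_neg_one hunit,
    NearRing.mul_neg_one hunit]

protected theorem add_comm (hunit : ∀ a : K, a ≠ 0 → IsUnit a) (a b : K) : a + b = b + a :=
  calc a + b = -(-b + -a) := by rw [neg_add_rev, neg_neg, neg_neg]
    _ = b + a := by rw [NearRing.neg_add hunit, neg_neg, neg_neg]

end NearRing

namespace NearDomain

variable {K : Type*} [NearDomain K]

instance : Monoid K where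
  mul_assoc := NearDomain.mul_assoc
  one_mul := NearDomain.one_mul
  mul_one := NearDomain.mul_one

instance : RightDistribClass K := ⟨NearDomain.right_distrib⟩

theorem isUnit_of_ne_zero {a : K} (ha : a ≠ 0) : IsUnit a :=
  ⟨⟨a, a⁻¹, NearDomain.mul_inv_cancel a ha, NearDomain.inv_mul_cancel a ha⟩, rfl⟩

noncomputable instance : Neg K := ⟨fun a => (NearDomain.existsUnique_add_left a 0).choose⟩

protected theorem neg_add_cancel (a : K) : -a + a = 0 :=
  NearDomain.add_eq_zero_symm _ _ (NearDomain.existsUnique_add_left a 0).choose_spec.1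

noncomputable abbrev toAddGroup (hassoc : ∀ a b c : K, a + b + c = a + (b + c)) : AddGroup K :=
  AddGroup.ofLeftAxioms hassoc NearDomain.zero_add NearDomain.neg_add_cancel

end NearDomain

/-- A near-domain whose addition is associative is a near-field: addition is
then a commutative group. -/
theorem stmt_15 {K : Type*} [NearDomain K]
    (hassoc : ∀ a b c : K, a + b + c = a + (b + c)) :
    (∀ a b : K, a + b = b + a) ∧ (∀ a : K, ∃ b : K, a + b = 0) := by
  let := NearDomain.toAddGroup hassoc
  exact ⟨NearRing.add_comm fun _ => NearDomain.isUnit_of_ne_zero,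
    fun a => (NearDomain.existsUnique_add_left a 0).exists⟩
end
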